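/- arXiv:2109.05342 — 10 statements merged into one kernel-verified Lean document; each statement's English description precedes it below -/
import Mathlib

section
/- Let N = 2, h₀ = [0,1]ᵀ, h₁ = [cos τ, sin τ]ᵀ with τ ∈ (−π/2, π/2), R = σ₀² h₀h₀ᵀ + σ₁² h₁h₁ᵀ + c₁(h₀h₁ᵀ + h₁h₀ᵀ) + σₙ² I, and R_ε = R + λ_ε h₁h₁ᵀ for λ_ε ≥ 0. Then the RZF beamformer w = R_ε⁻¹h₀ / (h₀ᵀR_ε⁻¹h₀) equals [−cos τ((σ₁²+λ_ε) sin τ + c₁) / ((σ₁²+λ_ε)cos²τ + σₙ²), 1]ᵀ. -/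
/-! `R_ε` is `[h₀ h₁] [[σ₀², c₁], [c₁, σ₁²]] [h₀ h₁]ᵀ + λ_ε h₁h₁ᵀ + σₙ² I`, and the middle factor is
positive semidefinite because `|c₁| ≤ σ₀σ₁`; hence `R_ε` is positive definite, so it is invertible
and `h₀ᵀR_ε⁻¹h₀ > 0`. For a 2×2 matrix the adjugate gives `R_ε⁻¹h₀ ∝ [-r₀₁, r₀₀]`, so the
normalized beamformer is `[-r₀₁ / r₀₀, 1]`, and `r₀₀`, `r₀₁` are read off the definition. -/

open Matrix

lemma quadratic_nonneg_of_sq_le_mul {a b c : ℝ} (ha : 0 ≤ a) (hb : 0 ≤ b) (hc : c ^ 2 ≤ a * b)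
    (p q : ℝ) : 0 ≤ a * p ^ 2 + b * q ^ 2 + 2 * c * p * q := by
  rcases ha.eq_or_lt with rfl | ha
  · obtain rfl : c = 0 := by nlinarith [sq_nonneg c]
    simpa using mul_nonneg hb (sq_nonneg q)
  · -- completing the square: a * Q = (a p + c q)² + (a b - c²) q²
    refine nonneg_of_mul_nonneg_right ?_ ha
    nlinarith [sq_nonneg (a * p + c * q), mul_nonneg (sub_nonneg.2 hc) (sq_nonneg q)]

lemma posSemidef_vecMulVec_pair_of_sq_le_mul {n : Type*} [Fintype n] (u v : n → ℝ) {a b c : ℝ}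
    (ha : 0 ≤ a) (hb : 0 ≤ b) (hc : c ^ 2 ≤ a * b) :
    (a • vecMulVec u u + b • vecMulVec v v + c • (vecMulVec u v + vecMulVec v u)).PosSemidef := by
  refine .of_dotProduct_mulVec_nonneg ?_ fun x => ?_
  · simp only [IsHermitian, conjTranspose_add, conjTranspose_smul, conjTranspose_vecMulVec, star_trivial]
    rw [add_comm (vecMulVec v u)]
  · have hquad : star x ⬝ᵥ ((a • vecMulVec u u + b • vecMulVec v v
        + c • (vecMulVec u v + vecMulVec v u)) *ᵥ x)
        = a * (u ⬝ᵥ x) ^ 2 + b * (v ⬝ᵥ x) ^ 2 + 2 * c * (u ⬝ᵥ x) * (v ⬝ᵥ x) := by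
      simp only [star_trivial, smul_add, add_mulVec, smul_mulVec, vecMulVec_mulVec, op_smul_eq_smul,
        dotProduct_comm x, add_dotProduct, smul_dotProduct, smul_eq_mul]
      ring
    exact hquad ▸ quadratic_nonneg_of_sq_le_mul ha hb hc _ _

lemma inv_mulVec_normalize_fin_two {K : Type*} [Field K] (M : Matrix (Fin 2) (Fin 2) K)
    (hdet : M.det ≠ 0) (h00 : M 0 0 ≠ 0) :
    (![0, 1] ⬝ᵥ M⁻¹ *ᵥ ![0, 1])⁻¹ • M⁻¹ *ᵥ ![0, 1] = ![-M 0 1 / M 0 0, 1] := by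
  rw [inv_def, adjugate_fin_two, Ring.inverse_eq_inv']
  ext i
  fin_cases i <;> simp [mulVec, dotProduct, Fin.sum_univ_two] <;> field_simp

theorem rzf_closed_form_real_general
    (τ σ02 σ12 σn2 c1 lam : ℝ)
    (hσ02 : 0 < σ02) (hσ12 : 0 < σ12) (hσn2 : 0 < σn2)
    (hc1 : |c1| ≤ Real.sqrt σ02 * Real.sqrt σ12)
    (hlam : 0 ≤ lam)
    (h0 h1 : Fin 2 → ℝ)
    (hh0 : h0 = ![0, 1]) (hh1 : h1 = ![Real.cos τ, Real.sin τ])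
    (R Re : Matrix (Fin 2) (Fin 2) ℝ)
    (hR : R = σ02 • Matrix.vecMulVec h0 h0 + σ12 • Matrix.vecMulVec h1 h1
            + c1 • (Matrix.vecMulVec h0 h1 + Matrix.vecMulVec h1 h0)
            + σn2 • (1 : Matrix (Fin 2) (Fin 2) ℝ))
    (hRe : Re = R + lam • Matrix.vecMulVec h1 h1) :
    IsUnit Re.det ∧ h0 ⬝ᵥ Re⁻¹.mulVec h0 ≠ 0 ∧
    (h0 ⬝ᵥ Re⁻¹.mulVec h0)⁻¹ • Re⁻¹.mulVec h0
      = ![-(Real.cos τ * ((σ12 + lam) * Real.sin τ + c1))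
            / ((σ12 + lam) * Real.cos τ ^ 2 + σn2), 1] := by
  have hc1sq : c1 ^ 2 ≤ σ02 * σ12 := by
    rwa [← Real.sqrt_mul hσ02.le, Real.le_sqrt (abs_nonneg c1) (by positivity), sq_abs] at hc1
  have hpd : Re.PosDef := by
    rw [hRe, hR]
    exact (PosDef.posSemidef_add (posSemidef_vecMulVec_pair_of_sq_le_mul h0 h1 hσ02.le hσ12.le hc1sq) (.smul .one hσn2))
      |>.add_posSemidef ((posSemidef_vecMulVec_self_star h1).smul hlam)
  have hh0ne : h0 ≠ 0 := by simp [hh0]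
  refine ⟨isUnit_iff_ne_zero.2 hpd.det_pos.ne', (hpd.inv.dotProduct_mulVec_pos hh0ne).ne', ?_⟩
  have hRe00 : Re 0 0 = (σ12 + lam) * Real.cos τ ^ 2 + σn2 := by
    simp [hRe, hR, hh0, hh1]; ring
  have hRe01 : Re 0 1 = Real.cos τ * ((σ12 + lam) * Real.sin τ + c1) := by
    simp [hRe, hR, hh0, hh1]; ring
  rw [hh0, inv_mulVec_normalize_fin_two Re hpd.det_pos.ne' hpd.diag_pos.ne', hRe00, hRe01]

/-- explicit form of the RZF beamformer in the real 2×2 setting. -/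
theorem rzf_closed_form_real
    (τ σ02 σ12 σn2 c1 lam : ℝ)
    (hτ : τ ∈ Set.Ioo (-(Real.pi / 2)) (Real.pi / 2))
    (hσ02 : 0 < σ02) (hσ12 : 0 < σ12) (hσn2 : 0 < σn2)
    (hc1 : |c1| ≤ Real.sqrt σ02 * Real.sqrt σ12)
    (hlam : 0 ≤ lam)
    (h0 h1 : Fin 2 → ℝ)
    (hh0 : h0 = ![0, 1]) (hh1 : h1 = ![Real.cos τ, Real.sin τ])
    (R Re : Matrix (Fin 2) (Fin 2) ℝ)
    (hR : R = σ02 • Matrix.vecMulVec h0 h0 + σ12 • Matrix.vecMulVec h1 h1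
            + c1 • (Matrix.vecMulVec h0 h1 + Matrix.vecMulVec h1 h0)
            + σn2 • (1 : Matrix (Fin 2) (Fin 2) ℝ))
    (hRe : Re = R + lam • Matrix.vecMulVec h1 h1) :
    IsUnit Re.det ∧ h0 ⬝ᵥ Re⁻¹.mulVec h0 ≠ 0 ∧
    (h0 ⬝ᵥ Re⁻¹.mulVec h0)⁻¹ • Re⁻¹.mulVec h0
      = ![-(Real.cos τ * ((σ12 + lam) * Real.sin τ + c1))
            / ((σ12 + lam) * Real.cos τ ^ 2 + σn2), 1] :=
  rzf_closed_form_real_general τ σ02 σ12 σn2 c1 lam hσ02 hσ12 hσn2 hc1 hlam h0 h1 hh0 hh1 R Re hR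
    hRe
end

section
/- In the real 2-dimensional single-interference setting, the MSE of the RZF beamformer as a function of λ_ε ≥ 0 equals δ²(σ₁² cos²τ + σₙ²)/g(λ_ε)² − 2σₙ²δ tan τ / g(λ_ε) + σₙ²(tan²τ + 1), where δ = σₙ² tan τ − c₁ cos τ and g(λ) = λ cos²τ + σ₁² cos²τ + σₙ². -/
open Matrix

/-- the MSE of the RZF beamformer in the real 2D single-interference
setting, as a function of the Lagrange multiplier `λ_ε`. -/
theorem rzf_mse_formula_real
    (τ σ12 σn2 c1 lam : ℝ)
    (hτ : τ ∈ Set.Ioo (-(Real.pi / 2)) (Real.pi / 2))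
    (hσ12 : 0 < σ12) (hσn2 : 0 < σn2) (hlam : 0 ≤ lam)
    (h1 : Fin 2 → ℝ) (hh1 : h1 = ![Real.cos τ, Real.sin τ])
    (g : ℝ → ℝ) (hg : ∀ l, g l = l * Real.cos τ ^ 2 + σ12 * Real.cos τ ^ 2 + σn2)
    (δ : ℝ) (hδ : δ = σn2 * Real.tan τ - c1 * Real.cos τ)
    (w : Fin 2 → ℝ)
    (hw : w = ![-(Real.cos τ * ((σ12 + lam) * Real.sin τ + c1)) / g lam, 1])
    (MSE : (Fin 2 → ℝ) → ℝ)
    (hMSE : ∀ v, MSE v = σn2 * (∑ i, v i ^ 2) + σ12 * (h1 ⬝ᵥ v) ^ 2) :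
    MSE w = δ ^ 2 * (σ12 * Real.cos τ ^ 2 + σn2) / g lam ^ 2
            - 2 * σn2 * δ * Real.tan τ / g lam
            + σn2 * (Real.tan τ ^ 2 + 1) := by
  have hc : Real.cos τ ≠ 0 := by
    have := Real.cos_pos_of_mem_Ioo (by simpa using hτ)
    positivity
  have hgpos : 0 < g lam := by
    rw [hg]
    have : 0 ≤ lam * Real.cos τ ^ 2 := by positivity
    nlinarith [sq_nonneg (Real.cos τ)]
  have hgne : g lam ≠ 0 := ne_of_gt hgpos
  have htan : Real.tan τ = Real.sin τ / Real.cos τ := Real.tan_eq_sin_div_cos τ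
  have hw0 : w 0 = δ / g lam - Real.tan τ := by
    rw [hw, hδ, htan]
    show -(Real.cos τ * ((σ12 + lam) * Real.sin τ + c1)) / g lam = _
    rw [hg]
    field_simp
    ring
  have hw1 : w 1 = 1 := by rw [hw]; rfl
  have hdot : h1 ⬝ᵥ w = δ * Real.cos τ / g lam := by
    have : h1 ⬝ᵥ w = Real.cos τ * w 0 + Real.sin τ * w 1 := by
      rw [hh1]
      simp [dotProduct, Fin.sum_univ_two]
    rw [this, hw0, hw1, htan]
    field_simp
    ring
  rw [hMSE, Fin.sum_univ_two, hw0, hw1, hdot]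
  field_simp
  ring
end

section
/- In the real single-interference setting with δ ≠ 0: if γ := σₙ² tan τ / δ ≤ 0 then MSE(λ_ε) is strictly monotonically decreasing in λ_ε on [0,∞); its infimum is the zero-forcing MSE σₙ²(tan²τ + 1) attained in the limit λ_ε → ∞. -/
/-!
Writing `u = 1 / g(λ)`, the MSE is the quadratic `A u² - 2 B u + C` with `A = δ²(σ₁² cos² τ + σₙ²) > 0`
and `B = σₙ² δ tan τ = γ δ² ≤ 0`, so it is strictly increasing in `u ≥ 0`. Since `g` is affine with
positive slope `cos² τ` and positive intercept, `u` decreases strictly from `1 / g(0)` to `0` as `λ`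
runs over `[0, ∞)`; hence the MSE decreases strictly towards its value `C = σₙ²(tan² τ + 1)` at `u = 0`.
-/

open Set Filter Topology

theorem AntitoneOn.isGLB_image_Ici_of_tendsto {α β : Type*} [LinearOrder α]
    [TopologicalSpace β] [Preorder β] [OrderClosedTopology β] {f : α → β} {a : α} {L : β}
    (hf : AntitoneOn f (Ici a)) (hL : Tendsto f atTop (𝓝 L)) : IsGLB (f '' Ici a) L := by
  rw [image_eq_range]
  exact isGLB_of_tendsto_atTop (fun x y hxy => hf x.2 y.2 hxy) (tendsto_comp_val_Ici_atTop.2 hL)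

theorem strictMonoOn_quadratic_Ici {a b : ℝ} (c : ℝ) (ha : 0 < a) (hb : b ≤ 0) :
    StrictMonoOn (fun u : ℝ => a * u ^ 2 - 2 * b * u + c) (Ici 0) := by
  intro u hu v hv huv
  have hu : 0 ≤ u := hu
  nlinarith [mul_pos ha (mul_pos (sub_pos.2 huv) (add_pos_of_nonneg_of_pos hu (hu.trans_lt huv)))]

theorem strictAntiOn_inv_affine_Ici {k d : ℝ} (hk : 0 < k) (hd : 0 < d) :
    StrictAntiOn (fun l : ℝ => (l * k + d)⁻¹) (Ici 0) := by
  intro x hx y hy hxy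
  have hx : 0 ≤ x := hx
  have hy : 0 ≤ y := hy
  exact inv_strictAntiOn (by positivity : 0 < x * k + d) (by positivity : 0 < y * k + d)
    (by gcongr)

theorem tendsto_inv_affine_atTop_zero {k : ℝ} (d : ℝ) (hk : 0 < k) :
    Tendsto (fun l : ℝ => (l * k + d)⁻¹) atTop (𝓝 0) :=
  tendsto_inv_atTop_zero.comp (tendsto_atTop_add_const_right _ d (tendsto_id.atTop_mul_const hk))

theorem rzf_mse_decreasing_of_gamma_nonpos_general
    (τ σ12 σn2 : ℝ)
    (hτ : τ ∈ Set.Ioo (-(Real.pi / 2)) (Real.pi / 2))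
    (hσ12 : 0 < σ12) (hσn2 : 0 < σn2)
    (g : ℝ → ℝ) (hg : ∀ l, g l = l * Real.cos τ ^ 2 + σ12 * Real.cos τ ^ 2 + σn2)
    (δ : ℝ) (hδ0 : δ ≠ 0)
    (MSE : ℝ → ℝ)
    (hMSE : ∀ l, MSE l = δ ^ 2 * (σ12 * Real.cos τ ^ 2 + σn2) / g l ^ 2
            - 2 * σn2 * δ * Real.tan τ / g l + σn2 * (Real.tan τ ^ 2 + 1))
    (γ : ℝ) (hγ : γ = σn2 * Real.tan τ / δ) (hγ0 : γ ≤ 0) :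
    StrictAntiOn MSE (Set.Ici 0) ∧
    Filter.Tendsto MSE Filter.atTop (nhds (σn2 * (Real.tan τ ^ 2 + 1))) ∧
    IsGLB (MSE '' Set.Ici 0) (σn2 * (Real.tan τ ^ 2 + 1)) := by
  set C := σn2 * (Real.tan τ ^ 2 + 1)
  set d := σ12 * Real.cos τ ^ 2 + σn2
  have hg' (l : ℝ) : g l = l * Real.cos τ ^ 2 + d := by rw [hg, add_assoc]
  have hk : 0 < Real.cos τ ^ 2 := pow_pos (Real.cos_pos_of_mem_Ioo hτ) 2
  have hd : 0 < d := by positivity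
  have hB : σn2 * Real.tan τ * δ ≤ 0 := by
    have : σn2 * Real.tan τ * δ = γ * δ ^ 2 := by rw [hγ]; field_simp
    rw [this]
    exact mul_nonpos_of_nonpos_of_nonneg hγ0 (sq_nonneg δ)
  have hMSE_comp : MSE = (fun u => δ ^ 2 * d * u ^ 2 - 2 * (σn2 * Real.tan τ * δ) * u + C) ∘
      fun l => (l * Real.cos τ ^ 2 + d)⁻¹ := by
    ext l
    rw [hMSE, hg', Function.comp_apply, div_eq_mul_inv, ← inv_pow]
    ring
  have hanti : StrictAntiOn MSE (Ici 0) := by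
    rw [hMSE_comp]
    exact (strictMonoOn_quadratic_Ici (a := δ ^ 2 * d) C (by positivity) hB).comp_strictAntiOn
      (strictAntiOn_inv_affine_Ici hk hd) fun l hl => by simp only [mem_Ici] at hl ⊢; positivity
  have hlim : Tendsto MSE atTop (𝓝 C) := by
    rw [hMSE_comp]
    have hq : Continuous fun u => δ ^ 2 * d * u ^ 2 - 2 * (σn2 * Real.tan τ * δ) * u + C := by
      fun_prop
    simpa using (hq.tendsto 0).comp (tendsto_inv_affine_atTop_zero d hk)
  exact ⟨hanti, hlim, hanti.antitoneOn.isGLB_image_Ici_of_tendsto hlim⟩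

/-- if `δ ≠ 0` and `γ = σₙ² tan τ / δ ≤ 0`, the RZF MSE is strictly
decreasing on `[0,∞)`, with infimum the zero-forcing MSE `σₙ²(tan²τ+1)`
attained in the limit `λ_ε → ∞`. -/
theorem rzf_mse_decreasing_of_gamma_nonpos
    (τ σ12 σn2 c1 : ℝ)
    (hτ : τ ∈ Set.Ioo (-(Real.pi / 2)) (Real.pi / 2))
    (hσ12 : 0 < σ12) (hσn2 : 0 < σn2)
    (g : ℝ → ℝ) (hg : ∀ l, g l = l * Real.cos τ ^ 2 + σ12 * Real.cos τ ^ 2 + σn2)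
    (δ : ℝ) (hδ : δ = σn2 * Real.tan τ - c1 * Real.cos τ) (hδ0 : δ ≠ 0)
    (MSE : ℝ → ℝ)
    (hMSE : ∀ l, MSE l = δ ^ 2 * (σ12 * Real.cos τ ^ 2 + σn2) / g l ^ 2
            - 2 * σn2 * δ * Real.tan τ / g l + σn2 * (Real.tan τ ^ 2 + 1))
    (γ : ℝ) (hγ : γ = σn2 * Real.tan τ / δ) (hγ0 : γ ≤ 0) :
    StrictAntiOn MSE (Set.Ici 0) ∧
    Filter.Tendsto MSE Filter.atTop (nhds (σn2 * (Real.tan τ ^ 2 + 1))) ∧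
    IsGLB (MSE '' Set.Ici 0) (σn2 * (Real.tan τ ^ 2 + 1)) :=
  rzf_mse_decreasing_of_gamma_nonpos_general τ σ12 σn2 hτ hσ12 hσn2 g hg δ hδ0 MSE hMSE γ hγ hγ0
end

section
/- In the real single-interference setting with δ ≠ 0 and γ := σₙ² tan τ / δ ∈ (0,1), the MSE function MSE(λ) attains its minimum over λ ∈ [0,∞) at λ* = −c₁(σ₁²cos²τ + σₙ²)/(σₙ² sin τ), and λ* > 0. -/
/-- if `δ ≠ 0` and `γ = σₙ² tan τ / δ ∈ (0,1)`, the RZF MSE attains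
its minimum over `[0,∞)` at `λ* = −c₁(σ₁²cos²τ + σₙ²)/(σₙ² sin τ) > 0`. -/
theorem rzf_mse_minimizer_of_gamma_in_unit_interval
    (τ σ12 σn2 c1 : ℝ)
    (hτ : τ ∈ Set.Ioo (-(Real.pi / 2)) (Real.pi / 2))
    (hσ12 : 0 < σ12) (hσn2 : 0 < σn2)
    (g : ℝ → ℝ) (hg : ∀ l, g l = l * Real.cos τ ^ 2 + σ12 * Real.cos τ ^ 2 + σn2)
    (δ : ℝ) (hδ : δ = σn2 * Real.tan τ - c1 * Real.cos τ) (hδ0 : δ ≠ 0)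
    (MSE : ℝ → ℝ)
    (hMSE : ∀ l, MSE l = δ ^ 2 * (σ12 * Real.cos τ ^ 2 + σn2) / g l ^ 2
            - 2 * σn2 * δ * Real.tan τ / g l + σn2 * (Real.tan τ ^ 2 + 1))
    (γ : ℝ) (hγ : γ = σn2 * Real.tan τ / δ) (hγ01 : γ ∈ Set.Ioo 0 1)
    (lamstar : ℝ)
    (hlamstar : lamstar = -(c1 * (σ12 * Real.cos τ ^ 2 + σn2)) / (σn2 * Real.sin τ)) :
    0 < lamstar ∧ ∀ lam : ℝ, 0 ≤ lam → MSE lamstar ≤ MSE lam := by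
  obtain ⟨hγ0, hγ1⟩ := hγ01
  have hcos : 0 < Real.cos τ := Real.cos_pos_of_mem_Ioo hτ
  have hco : Real.cos τ ≠ 0 := hcos.ne'
  have htan : Real.tan τ = Real.sin τ / Real.cos τ := Real.tan_eq_sin_div_cos τ
  have hsne : Real.sin τ ≠ 0 := by
    intro h0
    rw [hγ, htan, h0] at hγ0
    simp at hγ0
  set s := Real.sin τ with hs
  set co := Real.cos τ with hcodef
  set A := σ12 * co ^ 2 + σn2 with hA
  have hApos : 0 < A := by positivity
  have htan2 : σn2 * Real.tan τ = γ * δ := by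
    rw [hγ]; field_simp
  have h1 : γ * δ * co = σn2 * s := by
    rw [← htan2, htan]; field_simp
  have h2 : δ * co = σn2 * s - c1 * co ^ 2 := by
    rw [hδ, htan]; field_simp
  have hkey : c1 * co ^ 2 * γ = σn2 * s * (γ - 1) := by
    linear_combination γ * h2 - h1
  have hlam_eq : lamstar = A * (1 - γ) / (co ^ 2 * γ) := by
    rw [hlamstar]
    rw [div_eq_div_iff (mul_ne_zero hσn2.ne' hsne) (by positivity)]
    linear_combination (-A) * hkey
  have hlampos : 0 < lamstar := by
    rw [hlam_eq]
    apply div_pos (by nlinarith) (by positivity)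
  refine ⟨hlampos, fun lam hlam => ?_⟩
  have hgs : γ * g lamstar = A := by
    rw [hg, hlamstar]
    field_simp
    linear_combination (-(σ12 * co ^ 2 + σn2)) * hkey
  have hgspos : 0 < g lamstar := by nlinarith
  have hglpos : 0 < g lam := by
    rw [hg]
    have := mul_nonneg hlam (sq_nonneg co)
    nlinarith
  have hineq : ∀ x : ℝ, 0 < x →
      δ ^ 2 * A / x ^ 2 - 2 * σn2 * δ * Real.tan τ / x + σn2 * (Real.tan τ ^ 2 + 1)
      = (δ ^ 2 / A) * (A / x - γ) ^ 2 - δ ^ 2 * γ ^ 2 / A + σn2 * (Real.tan τ ^ 2 + 1) := by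
    intro x hx
    field_simp
    linear_combination (-(2 * δ * x * A)) * htan2
  rw [hMSE, hMSE, hineq _ hgspos, hineq _ hglpos]
  have hz : A / g lamstar - γ = 0 := by
    field_simp
    linarith [hgs]
  rw [hz]
  have h3 : 0 ≤ (δ ^ 2 / A) * (A / g lam - γ) ^ 2 := by positivity
  nlinarith
end

section
/- In the real single-interference setting with δ ≠ 0 and γ := σₙ² tan τ / δ ≥ 1, MSE(λ) is monotonically increasing on [0,∞) and is minimized at λ = 0. -/
/-- if `δ ≠ 0` and `γ = σₙ² tan τ / δ ≥ 1`, the RZF MSE is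
monotonically increasing on `[0,∞)` and minimized at `λ = 0`. -/
theorem rzf_mse_increasing_of_gamma_ge_one
    (τ σ12 σn2 c1 : ℝ)
    (hτ : τ ∈ Set.Ioo (-(Real.pi / 2)) (Real.pi / 2))
    (hσ12 : 0 < σ12) (hσn2 : 0 < σn2)
    (g : ℝ → ℝ) (hg : ∀ l, g l = l * Real.cos τ ^ 2 + σ12 * Real.cos τ ^ 2 + σn2)
    (δ : ℝ) (hδ : δ = σn2 * Real.tan τ - c1 * Real.cos τ) (hδ0 : δ ≠ 0)
    (MSE : ℝ → ℝ)
    (hMSE : ∀ l, MSE l = δ ^ 2 * (σ12 * Real.cos τ ^ 2 + σn2) / g l ^ 2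
            - 2 * σn2 * δ * Real.tan τ / g l + σn2 * (Real.tan τ ^ 2 + 1))
    (γ : ℝ) (hγ : γ = σn2 * Real.tan τ / δ) (hγ1 : 1 ≤ γ) :
    MonotoneOn MSE (Set.Ici 0) ∧ ∀ lam : ℝ, 0 ≤ lam → MSE 0 ≤ MSE lam := by
  have hc : 0 < Real.cos τ := Real.cos_pos_of_mem_Ioo hτ
  set t := Real.tan τ with ht
  set G0 : ℝ := σ12 * Real.cos τ ^ 2 + σn2 with hG0
  have hG0pos : 0 < G0 := by positivity
  have hst : σn2 * t = γ * δ := by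
    field_simp at hγ; linarith [hγ]
  have hkey : δ ^ 2 ≤ σn2 * δ * t := by
    have h1 : σn2 * δ * t = γ * δ ^ 2 := by
      calc σn2 * δ * t = (σn2 * t) * δ := by ring
        _ = γ * δ * δ := by rw [hst]
        _ = γ * δ ^ 2 := by ring
    have h2 : (0:ℝ) < δ ^ 2 := by positivity
    nlinarith [h2, hγ1, h1]
  have hmono : MonotoneOn MSE (Set.Ici 0) := by
    intro a ha b hb hab
    simp only [Set.mem_Ici] at ha hb
    have hga : g a = a * Real.cos τ ^ 2 + G0 := by rw [hg]; ring
    have hgb : g b = b * Real.cos τ ^ 2 + G0 := by rw [hg]; ring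
    have hgaG : G0 ≤ g a := by
      rw [hga]; nlinarith [sq_nonneg (Real.cos τ)]
    have hgbG : G0 ≤ g b := by
      rw [hgb]; nlinarith [sq_nonneg (Real.cos τ)]
    have hgapos : 0 < g a := lt_of_lt_of_le hG0pos hgaG
    have hgbpos : 0 < g b := lt_of_lt_of_le hG0pos hgbG
    have hgab : g a ≤ g b := by
      rw [hga, hgb]; nlinarith [sq_nonneg (Real.cos τ)]
    have hnum : δ ^ 2 * G0 * (g a + g b) ≤ 2 * σn2 * δ * t * (g a * g b) := by
      nlinarith [mul_nonneg (sub_nonneg.2 hkey) (mul_pos hgapos hgbpos).le,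
        mul_nonneg (sq_nonneg δ) (mul_nonneg hgapos.le (sub_nonneg.2 hgbG)),
        mul_nonneg (sq_nonneg δ) (mul_nonneg hgbpos.le (sub_nonneg.2 hgaG))]
    have hexp : MSE b - MSE a =
        ((g b - g a) * (2 * σn2 * δ * t * (g a * g b) - δ ^ 2 * G0 * (g a + g b)))
          / (g a ^ 2 * g b ^ 2) := by
      rw [hMSE a, hMSE b]
      field_simp
      ring
    have h0 : 0 ≤ MSE b - MSE a := by
      rw [hexp]
      apply div_nonneg
      · exact mul_nonneg (by linarith) (by linarith)
      · positivity
    linarith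
  refine ⟨hmono, fun lam hlam => hmono (Set.mem_Ici.2 (le_refl 0)) hlam hlam⟩
end

section
/- In the real 2D setting, the MVDR beamformer w_MVDR (RZF with λ_ε = 0) satisfies MSE(w_MVDR) = (σₙ²(σ₁² + σₙ²) + c₁² cos²τ) / (σ₁² cos²τ + σₙ²). -/
open Matrix

/-- MSE of the MVDR beamformer in the real 2D setting. -/
theorem mvdr_mse_real
    (τ σ12 σn2 c1 : ℝ)
    (hτ : τ ∈ Set.Ioo (-(Real.pi / 2)) (Real.pi / 2))
    (hσ12 : 0 < σ12) (hσn2 : 0 < σn2)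
    (h1 : Fin 2 → ℝ) (hh1 : h1 = ![Real.cos τ, Real.sin τ])
    (wMVDR : Fin 2 → ℝ)
    (hw : wMVDR = ![-(Real.cos τ * (σ12 * Real.sin τ + c1))
                      / (σ12 * Real.cos τ ^ 2 + σn2), 1])
    (MSE : (Fin 2 → ℝ) → ℝ)
    (hMSE : ∀ v, MSE v = σn2 * (∑ i, v i ^ 2) + σ12 * (h1 ⬝ᵥ v) ^ 2) :
    MSE wMVDR = (σn2 * (σ12 + σn2) + c1 ^ 2 * Real.cos τ ^ 2)
                  / (σ12 * Real.cos τ ^ 2 + σn2) := by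
  have hd : σ12 * Real.cos τ ^ 2 + σn2 ≠ 0 := by positivity
  have hs : Real.sin τ ^ 2 = 1 - Real.cos τ ^ 2 := by
    have := Real.sin_sq_add_cos_sq τ; linarith
  rw [hMSE, hw, hh1]
  simp [Fin.sum_univ_two, dotProduct, Matrix.cons_val_zero, Matrix.cons_val_one]
  field_simp
  ring_nf
  rw [hs]
  ring
end

section
/- In the real single-interference setting with δ ≠ 0 and the MSE-optimal λ_ε: if γ ≤ 0 then MSE_RZF = MSE_ZF; if γ ∈ (0,1) then MSE_RZF = MSE_MMSE-DR; if γ ≥ 1 then MSE_RZF = MSE_MVDR. Here γ = σₙ² tan τ / δ. -/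
set_option maxHeartbeats 1000000


/-- with the MSE-optimal `λ_ε`, the RZF MSE (the infimum of the MSE
over `λ ∈ [0,∞)`) equals the ZF MSE when `γ ≤ 0`, the MMSE-DR MSE when
`γ ∈ (0,1)`, and the MVDR MSE when `γ ≥ 1`. -/
theorem rzf_mse_cases_real
    (τ σ12 σn2 c1 : ℝ)
    (hτ : τ ∈ Set.Ioo (-(Real.pi / 2)) (Real.pi / 2))
    (hσ12 : 0 < σ12) (hσn2 : 0 < σn2)
    (g : ℝ → ℝ) (hg : ∀ l, g l = l * Real.cos τ ^ 2 + σ12 * Real.cos τ ^ 2 + σn2)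
    (δ : ℝ) (hδ : δ = σn2 * Real.tan τ - c1 * Real.cos τ) (hδ0 : δ ≠ 0)
    (MSE : ℝ → ℝ)
    (hMSE : ∀ l, MSE l = δ ^ 2 * (σ12 * Real.cos τ ^ 2 + σn2) / g l ^ 2
            - 2 * σn2 * δ * Real.tan τ / g l + σn2 * (Real.tan τ ^ 2 + 1))
    (γ : ℝ) (hγ : γ = σn2 * Real.tan τ / δ)
    (mseRZF : ℝ) (hRZF : mseRZF = sInf (MSE '' Set.Ici 0)) :
    (γ ≤ 0 → mseRZF = σn2 * (Real.tan τ ^ 2 + 1)) ∧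
    (γ ∈ Set.Ioo (0 : ℝ) 1 →
      mseRZF = σn2 * (σ12 + σn2) / (σ12 * Real.cos τ ^ 2 + σn2)) ∧
    (1 ≤ γ → mseRZF = MSE 0) := by
  have hc : 0 < Real.cos τ := Real.cos_pos_of_mem_Ioo hτ
  set c := Real.cos τ with hc_def
  set s := Real.tan τ with hs_def
  have hc2 : c ^ 2 * (s ^ 2 + 1) = 1 := by
    have hts : s = Real.sin τ / c := Real.tan_eq_sin_div_cos τ
    have hsc : Real.sin τ ^ 2 + c ^ 2 = 1 := Real.sin_sq_add_cos_sq τ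
    rw [hts]
    field_simp
    linarith [hsc]
  set a : ℝ := σ12 * c ^ 2 + σn2 with ha_def
  have ha : 0 < a := by positivity
  have hγδ : σn2 * s = γ * δ := by rw [hγ]; field_simp
  set K : ℝ := σn2 * (s ^ 2 + 1) with hK_def
  have hgl : ∀ l, g l = l * c ^ 2 + a := by intro l; rw [hg l, ha_def]; ring
  have hMSE' : ∀ l, MSE l = δ ^ 2 * a / g l ^ 2 - 2 * γ * δ ^ 2 / g l + K := by
    intro l
    rw [hMSE l, show 2 * σn2 * δ * s = 2 * γ * δ ^ 2 by rw [hγ]; field_simp]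
  have hGa : ∀ l, 0 ≤ l → a ≤ g l := by
    intro l hl; rw [hgl l]; nlinarith [sq_nonneg c]
  have hGpos : ∀ l, 0 ≤ l → 0 < g l := fun l hl => lt_of_lt_of_le ha (hGa l hl)
  -- universal lower bound m₀ = K - γ²δ²/a
  have key : ∀ l, 0 ≤ l →
      MSE l - (K - γ ^ 2 * δ ^ 2 / a) = δ ^ 2 * (a - γ * g l) ^ 2 / (a * g l ^ 2) := by
    intro l hl
    have hG := hGpos l hl
    rw [hMSE' l]
    field_simp
    ring
  have hlow : ∀ l, 0 ≤ l → K - γ ^ 2 * δ ^ 2 / a ≤ MSE l := by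
    intro l hl
    have hG := hGpos l hl
    nlinarith [key l hl, div_nonneg (mul_nonneg (sq_nonneg δ) (sq_nonneg (a - γ * g l)))
      (le_of_lt (mul_pos ha (pow_pos hG 2)))]
  have hne : (MSE '' Set.Ici 0).Nonempty := ⟨MSE 0, 0, Set.self_mem_Ici, rfl⟩
  have hbdd : BddBelow (MSE '' Set.Ici 0) := by
    refine ⟨K - γ ^ 2 * δ ^ 2 / a, ?_⟩
    rintro x ⟨l, hl, rfl⟩
    exact hlow l hl
  rw [hRZF]
  refine ⟨?_, ?_, ?_⟩
  · -- γ ≤ 0 : inf = K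
    intro hγ0
    -- tendsto
    have hgtop : Filter.Tendsto g Filter.atTop Filter.atTop := by
      have h1 : Filter.Tendsto (fun l : ℝ => l * c ^ 2 + a) Filter.atTop Filter.atTop :=
        Filter.tendsto_atTop_add_const_right _ a
          (Filter.Tendsto.atTop_mul_const (by positivity) Filter.tendsto_id)
      exact h1.congr fun l => (hgl l).symm
    have hinv : Filter.Tendsto (fun l => (g l)⁻¹) Filter.atTop (nhds 0) :=
      Filter.Tendsto.inv_tendsto_atTop hgtop
    have hpoly : Continuous (fun t : ℝ => δ ^ 2 * a * t ^ 2 - 2 * γ * δ ^ 2 * t + K) :=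
      ((continuous_const.mul (continuous_pow 2)).sub (continuous_const.mul continuous_id)).add
        continuous_const
    have ht0 := (hpoly.tendsto 0).comp hinv
    have ht : Filter.Tendsto MSE Filter.atTop (nhds K) := by
      have heq : ∀ l, δ ^ 2 * a * ((g l)⁻¹) ^ 2 - 2 * γ * δ ^ 2 * (g l)⁻¹ + K = MSE l := by
        intro l; rw [hMSE' l]; ring
      have hval : δ ^ 2 * a * (0:ℝ) ^ 2 - 2 * γ * δ ^ 2 * 0 + K = K := by ring
      have h := ht0.congr (fun l => by simpa only [Function.comp_apply] using heq l)
      rwa [hval] at h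
    apply le_antisymm
    · refine ge_of_tendsto ht ?_
      filter_upwards [Filter.eventually_ge_atTop (0:ℝ)] with l hl
      exact csInf_le hbdd ⟨l, hl, rfl⟩
    · refine le_csInf hne ?_
      rintro x ⟨l, hl, rfl⟩
      have hG := hGpos l hl
      have h1 : 0 ≤ δ ^ 2 * a / g l ^ 2 := by positivity
      have h2 : 2 * γ * δ ^ 2 / g l ≤ 0 :=
        div_nonpos_of_nonpos_of_nonneg (by nlinarith [sq_nonneg δ]) (le_of_lt hG)
      linarith [hMSE' l, h1, h2]
  · -- 0 < γ < 1 : inf = m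
    rintro ⟨hγ1, hγ2⟩
    have hm_eq : σn2 * (σ12 + σn2) / a = K - γ ^ 2 * δ ^ 2 / a := by
      rw [div_eq_iff (ne_of_gt ha)]
      have h1 : γ ^ 2 * δ ^ 2 = σn2 ^ 2 * s ^ 2 := by
        linear_combination (-(σn2 * s) - γ * δ) * hγδ
      rw [sub_mul, div_mul_cancel₀ _ (ne_of_gt ha), h1, hK_def, ha_def]
      linear_combination (-(σ12 * σn2)) * hc2
    obtain ⟨l₀, hl₀, hgl₀⟩ : ∃ l₀, 0 ≤ l₀ ∧ g l₀ = a / γ := by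
      have hγ0 : γ ≠ 0 := ne_of_gt hγ1
      refine ⟨a * (1 - γ) / (γ * c ^ 2), div_nonneg (by nlinarith) (by positivity), ?_⟩
      rw [hgl]
      field_simp
      ring
    have hval : MSE l₀ = σn2 * (σ12 + σn2) / a := by
      rw [hMSE' l₀, hgl₀, hm_eq]
      have hγ0 : (γ:ℝ) ≠ 0 := ne_of_gt hγ1
      field_simp
      ring
    apply le_antisymm
    · exact le_of_le_of_eq (csInf_le hbdd ⟨l₀, Set.mem_Ici.mpr hl₀, rfl⟩) hval
    · refine le_csInf hne ?_
      rintro x ⟨l, hl, rfl⟩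
      rw [hm_eq]
      exact hlow l hl
  · -- γ ≥ 1 : inf = MSE 0
    intro hγ1
    have hg0 : g 0 = a := by rw [hgl 0]; ring
    apply le_antisymm
    · exact csInf_le hbdd ⟨0, Set.self_mem_Ici, rfl⟩
    · refine le_csInf hne ?_
      rintro x ⟨l, hl, rfl⟩
      have hG := hGpos l hl
      have hGa' := hGa l hl
      have hfac : MSE l - MSE 0 =
          δ ^ 2 * ((g l - a) * (2 * γ * g l - a - g l)) / (a * g l ^ 2) := by
        rw [hMSE' l, hMSE' 0, hg0]
        field_simp
        ring
      have hnum : 0 ≤ δ ^ 2 * ((g l - a) * (2 * γ * g l - a - g l)) := by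
        have h1 : 0 ≤ g l - a := by linarith
        have h2 : 0 ≤ 2 * γ * g l - a - g l := by nlinarith
        positivity
      nlinarith [hfac, div_nonneg hnum (le_of_lt (mul_pos ha (pow_pos hG 2)))]
end

section
/- Let N = 2, h₀ = [0,1]ᵀ, h₁ = [cos τ, sin τ e^{iφ_z}]ᵀ with τ ∈ [0,π/2), and R_ε = σ₀²h₀h₀ᴴ + σ₁²h₁h₁ᴴ + c₁ h₁h₀ᴴ + c₁* h₀h₁ᴴ + σₙ² I + λ_ε h₁h₁ᴴ. Then w_RZF = R_ε⁻¹h₀/(h₀ᴴR_ε⁻¹h₀) = [−cos τ((σ₁²+λ_ε) z* + c₁)/((σ₁²+λ_ε)cos²τ + σₙ²), 1]ᵀ where z = sin τ e^{iφ_z}. -/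
open Matrix Complex

/-- explicit form of the RZF beamformer in the complex 2×2 setting. -/
theorem rzf_closed_form_complex
    (τ φz σ02 σ12 σn2 : ℝ) (c1 : ℂ) (lam : ℝ)
    (hτ : τ ∈ Set.Ico 0 (Real.pi / 2))
    (hφz : φz ∈ Set.Ico 0 (2 * Real.pi))
    (hσ02 : 0 < σ02) (hσ12 : 0 < σ12) (hσn2 : 0 < σn2)
    (hc1 : ‖c1‖ ≤ Real.sqrt σ02 * Real.sqrt σ12)
    (hlam : 0 ≤ lam)
    (h0 h1 : Fin 2 → ℂ)
    (hh0 : h0 = ![0, 1])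
    (hh1 : h1 = ![(Real.cos τ : ℂ), (Real.sin τ : ℂ) * Complex.exp (φz * Complex.I)])
    (Re : Matrix (Fin 2) (Fin 2) ℂ)
    (hRe : Re = (σ02 : ℂ) • Matrix.vecMulVec h0 (star h0)
              + (σ12 : ℂ) • Matrix.vecMulVec h1 (star h1)
              + c1 • Matrix.vecMulVec h1 (star h0)
              + (star c1) • Matrix.vecMulVec h0 (star h1)
              + (σn2 : ℂ) • (1 : Matrix (Fin 2) (Fin 2) ℂ)
              + (lam : ℂ) • Matrix.vecMulVec h1 (star h1)) :
    IsUnit Re.det ∧ star h0 ⬝ᵥ Re⁻¹.mulVec h0 ≠ 0 ∧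
    (star h0 ⬝ᵥ Re⁻¹.mulVec h0)⁻¹ • Re⁻¹.mulVec h0
      = ![-(Real.cos τ * (((σ12 : ℂ) + lam)
              * ((Real.sin τ : ℂ) * Complex.exp (-(φz * Complex.I))) + c1))
            / (((σ12 : ℂ) + lam) * (Real.cos τ : ℂ) ^ 2 + σn2), 1] := by
  obtain ⟨hτ0, hτπ⟩ := hτ
  have hπ := Real.pi_pos
  have hcos : 0 < Real.cos τ := Real.cos_pos_of_mem_Ioo ⟨by linarith, hτπ⟩
  have hsin : 0 ≤ Real.sin τ := Real.sin_nonneg_of_nonneg_of_le_pi hτ0 (by linarith)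
  have hcE : (starRingEnd ℂ) (Complex.exp (↑φz * Complex.I)) = Complex.exp (-(↑φz * Complex.I)) := by
    rw [← Complex.exp_conj]; congr 1; simp
  have h1e : Complex.exp (↑φz * Complex.I) * Complex.exp (-(↑φz * Complex.I)) = 1 := by
    rw [← Complex.exp_add]; simp
  have h2 : c1 * Complex.exp (↑φz * Complex.I) + star c1 * Complex.exp (-(↑φz * Complex.I))
      = 2 * (((c1 * Complex.exp (↑φz * Complex.I)).re : ℝ) : ℂ) := by
    have h := Complex.add_conj (c1 * Complex.exp (↑φz * Complex.I))
    rw [_root_.map_mul, hcE] at h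
    rw [Complex.star_def]
    exact_mod_cast h
  have h3 : c1 * star c1 = (((‖c1‖) ^ 2 : ℝ) : ℂ) := by
    rw [Complex.star_def, Complex.mul_conj]
    norm_cast
    exact (Complex.sq_norm c1).symm
  have hReM : Re = !![ ((σ12:ℂ)+lam) * (Real.cos τ:ℂ)^2 + σn2,
             (Real.cos τ:ℂ) * (((σ12:ℂ)+lam) * ((Real.sin τ:ℂ) * Complex.exp (-(φz * Complex.I))) + c1);
             (Real.cos τ:ℂ) * (((σ12:ℂ)+lam) * ((Real.sin τ:ℂ) * Complex.exp (φz * Complex.I)) + star c1),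
             (σ02:ℂ) + ((σ12:ℂ)+lam) * ((Real.sin τ:ℂ) * Complex.exp (φz * Complex.I)) * ((Real.sin τ:ℂ) * Complex.exp (-(φz * Complex.I)))
               + c1 * ((Real.sin τ:ℂ) * Complex.exp (φz * Complex.I))
               + star c1 * ((Real.sin τ:ℂ) * Complex.exp (-(φz * Complex.I))) + σn2 ] := by
    subst hh0 hh1 hRe
    ext i j
    fin_cases i <;> fin_cases j <;>
      simp [Matrix.vecMulVec_apply, Matrix.one_apply, Complex.star_def, _root_.map_mul,
        Complex.conj_ofReal, hcE, -Complex.ofReal_cos, -Complex.ofReal_sin,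
        -Matrix.cons_vecMulVec, -Matrix.vecMulVec_cons] <;> ring
  clear hRe
  set Δ : ℝ := Real.cos τ ^ 2 * ((σ12 + lam) * σ02 - ‖c1‖ ^ 2)
      + (σ12 + lam) * Real.cos τ ^ 2 * σn2 + σn2 * σ02
      + σn2 * (σ12 + lam) * Real.sin τ ^ 2
      + 2 * σn2 * Real.sin τ * (c1 * Complex.exp (↑φz * Complex.I)).re + σn2 ^ 2 with hΔ
  have hdet : Re.det = (Δ : ℂ) := by
    rw [hReM, Matrix.det_fin_two_of, hΔ]
    push_cast [-Complex.ofReal_sin, -Complex.ofReal_cos]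
    linear_combination (norm := (push_cast; ring1)) ((σn2:ℂ) * ((σ12:ℂ)+lam) * (Real.sin τ:ℂ)^2) * h1e
      + ((σn2:ℂ) * (Real.sin τ:ℂ)) * h2 - ((Real.cos τ:ℂ))^2 * h3
  have habs2 : ‖c1‖ ^ 2 ≤ σ02 * σ12 := by
    have h := mul_le_mul hc1 hc1 (norm_nonneg c1) (by positivity)
    have h0 : Real.sqrt σ02 ^ 2 = σ02 := Real.sq_sqrt hσ02.le
    have h1' : Real.sqrt σ12 ^ 2 = σ12 := Real.sq_sqrt hσ12.le
    nlinarith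
  have hre_low : -(‖c1‖) ≤ (c1 * Complex.exp (↑φz * Complex.I)).re := by
    have habse : ‖c1 * Complex.exp (↑φz * Complex.I)‖ = ‖c1‖ := by
      rw [norm_mul, Complex.norm_exp]
      simp
    have hh := Complex.abs_re_le_norm (c1 * Complex.exp (↑φz * Complex.I))
    rw [habse] at hh
    have := neg_abs_le ((c1 * Complex.exp (↑φz * Complex.I)).re)
    linarith
  have hΔpos : 0 < Δ := by
    rw [hΔ]
    have hs0 : Real.sqrt σ02 ^ 2 = σ02 := Real.sq_sqrt hσ02.le
    have hs1 : Real.sqrt σ12 ^ 2 = σ12 := Real.sq_sqrt hσ12.le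
    have hsq : 0 ≤ (Real.sqrt σ02 - Real.sin τ * Real.sqrt σ12) ^ 2 := sq_nonneg _
    have hkey : 0 ≤ σn2 * Real.sin τ * ((c1 * Complex.exp (↑φz * Complex.I)).re + ‖c1‖) :=
      mul_nonneg (mul_nonneg hσn2.le hsin) (by linarith)
    have hkey2 : 0 ≤ σn2 * Real.sin τ * (Real.sqrt σ02 * Real.sqrt σ12 - ‖c1‖) :=
      mul_nonneg (mul_nonneg hσn2.le hsin) (by linarith)
    have hexpand : (Real.sqrt σ02 - Real.sin τ * Real.sqrt σ12) ^ 2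
        = σ02 + σ12 * Real.sin τ ^ 2 - 2 * Real.sin τ * (Real.sqrt σ02 * Real.sqrt σ12) := by
      rw [sub_sq, mul_pow, hs0, hs1]; ring
    have hkey3 : 0 ≤ σn2 * (σ02 + σ12 * Real.sin τ ^ 2
        - 2 * Real.sin τ * (Real.sqrt σ02 * Real.sqrt σ12)) :=
      mul_nonneg hσn2.le (hexpand ▸ hsq)
    nlinarith [mul_nonneg (mul_nonneg hσn2.le hlam) (sq_nonneg (Real.sin τ)),
      mul_nonneg (mul_nonneg hlam hσ02.le) (sq_nonneg (Real.cos τ)),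
      mul_nonneg (mul_nonneg hlam hσn2.le) (sq_nonneg (Real.cos τ)),
      mul_nonneg (sq_nonneg (Real.cos τ)) (sub_nonneg.2 habs2),
      mul_pos hσn2 hσn2, mul_pos (mul_pos hσ12 hσn2) (mul_pos hcos hcos)]
  have hdet_ne : Re.det ≠ 0 := by
    rw [hdet]
    exact_mod_cast hΔpos.ne'
  have hA_ne : (((σ12:ℂ)+lam) * (Real.cos τ:ℂ)^2 + σn2) ≠ 0 := by
    have h' : (((σ12 + lam) * Real.cos τ ^ 2 + σn2 : ℝ) : ℂ) ≠ 0 := by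
      exact_mod_cast (by positivity : ((σ12 + lam) * Real.cos τ ^ 2 + σn2 : ℝ) ≠ 0)
    rw [show (((σ12:ℂ)+lam) * (Real.cos τ:ℂ)^2 + σn2)
        = (((σ12 + lam) * Real.cos τ ^ 2 + σn2 : ℝ) : ℂ) by
      push_cast [-Complex.ofReal_cos]; ring]
    exact h'
  have hinv : Re⁻¹ = Re.det⁻¹ • !![
      (σ02:ℂ) + ((σ12:ℂ)+lam) * ((Real.sin τ:ℂ) * Complex.exp (φz * Complex.I)) * ((Real.sin τ:ℂ) * Complex.exp (-(φz * Complex.I)))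
               + c1 * ((Real.sin τ:ℂ) * Complex.exp (φz * Complex.I))
               + star c1 * ((Real.sin τ:ℂ) * Complex.exp (-(φz * Complex.I))) + σn2,
      -((Real.cos τ:ℂ) * (((σ12:ℂ)+lam) * ((Real.sin τ:ℂ) * Complex.exp (-(φz * Complex.I))) + c1));
      -((Real.cos τ:ℂ) * (((σ12:ℂ)+lam) * ((Real.sin τ:ℂ) * Complex.exp (φz * Complex.I)) + star c1)),
      ((σ12:ℂ)+lam) * (Real.cos τ:ℂ)^2 + σn2 ] := by
    rw [Matrix.inv_def, Ring.inverse_eq_inv']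
    congr 1
    rw [hReM, Matrix.adjugate_fin_two_of]
  have hmv : Re⁻¹.mulVec h0 =
      ![Re.det⁻¹ * (-((Real.cos τ:ℂ) * (((σ12:ℂ)+lam) * ((Real.sin τ:ℂ) * Complex.exp (-(φz * Complex.I))) + c1))),
        Re.det⁻¹ * (((σ12:ℂ)+lam) * (Real.cos τ:ℂ)^2 + σn2)] := by
    rw [hinv, hh0, Matrix.smul_mulVec]
    ext i
    fin_cases i <;>
      simp [Matrix.mulVec, dotProduct, Fin.sum_univ_two]
  have hdot : star h0 ⬝ᵥ Re⁻¹.mulVec h0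
      = Re.det⁻¹ * (((σ12:ℂ)+lam) * (Real.cos τ:ℂ)^2 + σn2) := by
    rw [hmv, hh0]
    simp [dotProduct, Fin.sum_univ_two]
  have hdot_ne : star h0 ⬝ᵥ Re⁻¹.mulVec h0 ≠ 0 := by
    rw [hdot]
    exact mul_ne_zero (inv_ne_zero hdet_ne) hA_ne
  refine ⟨isUnit_iff_ne_zero.mpr hdet_ne, hdot_ne, ?_⟩
  rw [hdot, hmv]
  ext i
  fin_cases i
  · simp only [Matrix.cons_val_zero, Matrix.cons_val_one, Matrix.head_cons, Pi.smul_apply,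
      smul_eq_mul]
    have key : ∀ X Y Z : ℂ, Y ≠ 0 → X ≠ 0 → (Y⁻¹ * X)⁻¹ * (Y⁻¹ * -Z) = -Z / X := by
      intro X Y Z hY hX
      field_simp
    exact key _ _ _ hdet_ne hA_ne
  · simp only [Matrix.cons_val_zero, Matrix.cons_val_one, Matrix.head_cons, Pi.smul_apply,
      smul_eq_mul]
    exact inv_mul_cancel₀ (mul_ne_zero (inv_ne_zero hdet_ne) hA_ne)
end

section
/- In the complex single-interference setting with δ₂ ≠ 0, the MSE function F(λ) = |δ₂|²(σ₁²cos²τ+σₙ²)/g(λ)² − 2σₙ²δ₁ tan τ/g(λ) + σₙ²(tan²τ+1) on [0,∞) satisfies: if γ := δ₁σₙ² tan τ/|δ₂|² ≤ 0, F is monotonically decreasing; if γ ≥ 1, F is monotonically increasing (minimized at λ=0); if γ ∈ (0,1), F is minimized at λ* = ((σ₁²cos²τ+σₙ²)/cos²τ)·(1−γ)/γ > 0. -/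
set_option maxHeartbeats 1000000


/-- monotonicity/minimization of the complex single-interference
MSE function `F` on `[0,∞)` according to the sign and size of
`γ = δ₁σₙ² tan τ / |δ₂|²`. -/
theorem rzf_mse_cases_complex
    (τ σ12 σn2 : ℝ)
    (hτ : τ ∈ Set.Ico 0 (Real.pi / 2))
    (hσ12 : 0 < σ12) (hσn2 : 0 < σn2)
    (g : ℝ → ℝ) (hg : ∀ l, g l = l * Real.cos τ ^ 2 + σ12 * Real.cos τ ^ 2 + σn2)
    (δ1 : ℝ) (δ2 : ℂ) (hδ1 : δ1 = δ2.re) (hδ2 : δ2 ≠ 0)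
    (F : ℝ → ℝ)
    (hF : ∀ l, F l = Complex.normSq δ2 * (σ12 * Real.cos τ ^ 2 + σn2) / g l ^ 2
            - 2 * σn2 * δ1 * Real.tan τ / g l + σn2 * (Real.tan τ ^ 2 + 1))
    (γ : ℝ) (hγ : γ = δ1 * σn2 * Real.tan τ / Complex.normSq δ2) :
    (γ ≤ 0 → AntitoneOn F (Set.Ici 0)) ∧
    (1 ≤ γ → MonotoneOn F (Set.Ici 0) ∧ ∀ lam : ℝ, 0 ≤ lam → F 0 ≤ F lam) ∧
    (γ ∈ Set.Ioo (0 : ℝ) 1 →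
      ∀ lamstar : ℝ,
        lamstar = (σ12 * Real.cos τ ^ 2 + σn2) / Real.cos τ ^ 2 * ((1 - γ) / γ) →
        0 < lamstar ∧ ∀ lam : ℝ, 0 ≤ lam → F lamstar ≤ F lam) := by
  obtain ⟨hτ0, hτπ⟩ := hτ
  have hcos : 0 < Real.cos τ := by
    apply Real.cos_pos_of_mem_Ioo
    constructor
    · linarith [Real.pi_pos]
    · linarith
  have hcpos : 0 < Real.cos τ ^ 2 := by positivity
  set c := Real.cos τ ^ 2 with hcdef
  set A := σ12 * c + σn2 with hAdef
  have hApos : 0 < A := by positivity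
  set N := Complex.normSq δ2 with hNdef
  have hN : 0 < N := Complex.normSq_pos.mpr hδ2
  have hB : 2 * σn2 * δ1 * Real.tan τ = 2 * γ * N := by
    rw [hγ]; field_simp
  have hgpos : ∀ l : ℝ, 0 ≤ l → 0 < g l := by
    intro l hl; rw [hg]; nlinarith
  have hgmono : ∀ x y : ℝ, x ≤ y → g x ≤ g y := by
    intro x y hxy; rw [hg, hg]; nlinarith
  have hgA : ∀ l : ℝ, 0 ≤ l → A ≤ g l := by
    intro l hl; rw [hg]; nlinarith
  have key : ∀ x y : ℝ, 0 ≤ x → 0 ≤ y →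
      F y - F x = (1 / g y - 1 / g x) * (N * A * (1 / g y + 1 / g x) - 2 * γ * N) := by
    intro x y hx hy
    have hgx := hgpos x hx
    have hgy := hgpos y hy
    rw [hF, hF, show (2:ℝ) * σn2 * δ1 * Real.tan τ = 2 * γ * N from hB]
    field_simp
    ring
  refine ⟨?_, ?_, ?_⟩
  · -- γ ≤ 0 : antitone
    intro hγ0 x hx y hy hxy
    have hx' : (0:ℝ) ≤ x := hx
    have hy' : (0:ℝ) ≤ y := hy
    have hgx := hgpos x hx'
    have hgy := hgpos y hy'
    have h1 : 1 / g y ≤ 1 / g x := one_div_le_one_div_of_le hgx (hgmono x y hxy)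
    have huy : 0 < 1 / g y := by positivity
    have hux : 0 < 1 / g x := by positivity
    have h2 : 0 < N * A * (1 / g y + 1 / g x) - 2 * γ * N := by
      nlinarith [mul_pos (mul_pos hN hApos) (add_pos huy hux),
        mul_nonneg hN.le (neg_nonneg.mpr hγ0)]
    have hk := key x y hx' hy'
    nlinarith [mul_nonneg (sub_nonneg.mpr h1) h2.le]
  · -- 1 ≤ γ : monotone and minimized at 0
    intro hγ1
    have hmono : MonotoneOn F (Set.Ici 0) := by
      intro x hx y hy hxy
      have hx' : (0:ℝ) ≤ x := hx
      have hy' : (0:ℝ) ≤ y := hy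
      have hgx := hgpos x hx'
      have hgy := hgpos y hy'
      have h1 : 1 / g y ≤ 1 / g x := one_div_le_one_div_of_le hgx (hgmono x y hxy)
      have h2x : 1 / g x ≤ 1 / A := one_div_le_one_div_of_le hApos (hgA x hx')
      have h2y : 1 / g y ≤ 1 / A := one_div_le_one_div_of_le hApos (hgA y hy')
      have hA1 : A * (1 / A) = 1 := by field_simp
      have h3a : N * A * (1 / g y + 1 / g x) ≤ N * A * (1 / A + 1 / A) :=
        mul_le_mul_of_nonneg_left (add_le_add h2y h2x) (mul_pos hN hApos).le
      have h3b : N * A * (1 / A + 1 / A) = 2 * N := by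
        field_simp; ring
      have h4 : N ≤ γ * N := le_mul_of_one_le_left hN.le hγ1
      have h2 : N * A * (1 / g y + 1 / g x) - 2 * γ * N ≤ 0 := by linarith
      have hk := key x y hx' hy'
      have hprod : 0 ≤ (1 / g x - 1 / g y) * (2 * γ * N - N * A * (1 / g y + 1 / g x)) :=
        mul_nonneg (by linarith) (by linarith)
      nlinarith [hk, hprod]
    exact ⟨hmono, fun lam hlam => hmono (by simp) hlam hlam⟩
  · -- 0 < γ < 1 : minimized at lamstar
    rintro ⟨hγ0, hγ1⟩ lamstar hls
    have hlspos : 0 < lamstar := by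
      rw [hls]
      have h1 : 0 < 1 - γ := by linarith
      positivity
    refine ⟨hlspos, ?_⟩
    intro lam hlam
    have hgs : g lamstar = A / γ := by
      rw [hg, hls]
      field_simp
      ring
    have hus : 1 / g lamstar = γ / A := by
      rw [hgs]
      rw [one_div_div]
    have hgl := hgpos lam hlam
    have hk := key lamstar lam hlspos.le hlam
    rw [hus] at hk
    have hsq : 0 ≤ (1 / g lam - γ / A) ^ 2 := sq_nonneg _
    have hfac : N * A * (1 / g lam + γ / A) - 2 * γ * N = N * A * (1 / g lam - γ / A) := by
      field_simp; ring
    rw [hfac] at hk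
    nlinarith [hk, mul_nonneg (mul_pos hN hApos).le hsq]
end

section
/- In the complex single-interference setting with δ₂ ≠ 0 and γ ∈ (0,1), the minimum of F over [0,∞) equals σₙ²(σ₁²+σₙ²)/(σ₁²cos²τ+σₙ²) + (1 − δ₁²/|δ₂|²)·σₙ⁴tan²τ/(σ₁²cos²τ+σₙ²); i.e., MSE_RZF = MSE_MMSE-DR + (1 − |δ₁/δ₂|²)σₙ⁴tan²τ/(σ₁²cos²τ+σₙ²). -/
set_option maxHeartbeats 2000000


/-- for `γ ∈ (0,1)` the minimum of the complex single-interference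
MSE function over `[0,∞)` equals
`MSE_MMSE-DR + (1 − |δ₁/δ₂|²)σₙ⁴tan²τ/(σ₁²cos²τ+σₙ²)`. -/
theorem rzf_mse_min_value_complex
    (τ σ12 σn2 : ℝ)
    (hτ : τ ∈ Set.Ico 0 (Real.pi / 2))
    (hσ12 : 0 < σ12) (hσn2 : 0 < σn2)
    (g : ℝ → ℝ) (hg : ∀ l, g l = l * Real.cos τ ^ 2 + σ12 * Real.cos τ ^ 2 + σn2)
    (δ1 : ℝ) (δ2 : ℂ) (hδ1 : δ1 = δ2.re) (hδ2 : δ2 ≠ 0)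
    (F : ℝ → ℝ)
    (hF : ∀ l, F l = Complex.normSq δ2 * (σ12 * Real.cos τ ^ 2 + σn2) / g l ^ 2
            - 2 * σn2 * δ1 * Real.tan τ / g l + σn2 * (Real.tan τ ^ 2 + 1))
    (γ : ℝ) (hγ : γ = δ1 * σn2 * Real.tan τ / Complex.normSq δ2)
    (hγ01 : γ ∈ Set.Ioo (0 : ℝ) 1) :
    IsLeast (F '' Set.Ici 0)
      (σn2 * (σ12 + σn2) / (σ12 * Real.cos τ ^ 2 + σn2)
        + (1 - δ1 ^ 2 / Complex.normSq δ2)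
            * (σn2 ^ 2 * Real.tan τ ^ 2 / (σ12 * Real.cos τ ^ 2 + σn2))) := by
  obtain ⟨hτ0, hτ2⟩ := hτ
  obtain ⟨hγ0, hγ1⟩ := hγ01
  set c := Real.cos τ with hc_def
  set t := Real.tan τ with ht_def
  set D := Complex.normSq δ2 with hD_def
  have hD : 0 < D := Complex.normSq_pos.mpr hδ2
  have hc : 0 < c := Real.cos_pos_of_mem_Ioo
    ⟨by linarith [Real.pi_pos], hτ2⟩
  have hsin : 0 ≤ Real.sin τ := Real.sin_nonneg_of_nonneg_of_le_pi hτ0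
    (by linarith [Real.pi_pos])
  have htc : t * c = Real.sin τ := by
    rw [ht_def, Real.tan_eq_sin_div_cos, ← hc_def]; field_simp [hc.ne']
  have hct : t ^ 2 * c ^ 2 + c ^ 2 = 1 := by
    have h1 : (t * c) ^ 2 + c ^ 2 = 1 := by
      rw [htc]; exact Real.sin_sq_add_cos_sq τ
    linear_combination h1
  have ht1 : (0:ℝ) < t ^ 2 + 1 := by positivity
  have hc2 : c ^ 2 = 1 / (t ^ 2 + 1) := by
    rw [eq_div_iff (ne_of_gt ht1)]; linear_combination hct
  have htnn : 0 ≤ t := by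
    have h : 0 ≤ t * c := htc ▸ hsin
    nlinarith
  have hs : 0 < σ12 * c ^ 2 + σn2 := by positivity
  have htγ : δ1 * σn2 * t = γ * D := by
    rw [hγ]; field_simp
  have ht0 : 0 < t := by
    rcases htnn.lt_or_eq with h | h
    · exact h
    · exfalso; rw [← h] at htγ; simp at htγ
      rcases htγ with h' | h' <;> nlinarith
  have hδ1v : δ1 = γ * D / (σn2 * t) := by
    rw [eq_div_iff (by positivity)]; linarith [htγ]
  constructor
  · -- membership: the minimum is attained at l* = (σ12*c²+σn2)*(1-γ)/(γ*c²)
    refine ⟨(σ12 * c ^ 2 + σn2) * (1 - γ) / (γ * c ^ 2), ?_, ?_⟩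
    · exact div_nonneg (mul_nonneg hs.le (by linarith)) (by positivity)
    · have hgl : g ((σ12 * c ^ 2 + σn2) * (1 - γ) / (γ * c ^ 2))
          = (σ12 * c ^ 2 + σn2) / γ := by
        rw [hg]
        field_simp
        ring
      rw [hF, hgl, hδ1v, hc2]
      field_simp
      ring
  · rintro y ⟨l, hl, rfl⟩
    have hG : 0 < g l := by
      rw [hg]
      have : 0 ≤ l * c ^ 2 := mul_nonneg hl (by positivity)
      nlinarith
    have hGne : g l ≠ 0 := ne_of_gt hG
    have key : F l = (σn2 * (σ12 + σn2) / (σ12 * c ^ 2 + σn2)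
          + (1 - δ1 ^ 2 / D) * (σn2 ^ 2 * t ^ 2 / (σ12 * c ^ 2 + σn2)))
        + D * (σ12 * c ^ 2 + σn2)
            * (1 / g l - γ / (σ12 * c ^ 2 + σn2)) ^ 2 := by
      rw [hF, hδ1v, hc2]
      field_simp
      ring
    rw [key]
    have h2 : 0 ≤ D * (σ12 * c ^ 2 + σn2)
        * (1 / g l - γ / (σ12 * c ^ 2 + σn2)) ^ 2 := by positivity
    linarith
end
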